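/- arXiv:1901.10633 — 2 statements merged into one kernel-verified Lean document; each statement's English description precedes it below -/
import Mathlib

section
/- Every run [i..j] of a string w with period p contains, for each of the two lexicographic orders ≺₀ and ≺₁ (where ≺₁ is the reverse of ≺₀), at least one substring of length p that is a Lyndon word with respect to that order and that does not begin at position i (i.e., starts strictly after the beginning of the run). -/
/-!
Let `u` be the first `p` letters of the run. Since the run has period `p`, its length-`p` factor
starting at offset `t` is the rotation `u.rotate t`, and because `p` is the smallest period, `u` is
primitive: a rotation fixing `u` would be a smaller period of the run. The lexicographically least
rotation of a primitive word is strictly smaller than all its other rotations, hence Lyndon. As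
the run has length at least `2p`, this rotation occurs at some offset in `[1, p]`. Applying this to
the order and to its reverse gives both factors.
-/

/-- A string is a Lyndon word w.r.t. an order `lt` on the alphabet:
it is (lexicographically) strictly smaller than every nonempty proper suffix. -/
def IsLyndonWrt {α : Type*} (lt : α → α → Prop) (w : List α) : Prop :=
  w ≠ [] ∧ ∀ i, 0 < i → i < w.length → List.Lex lt w (w.drop i)

/-- `p` is a period of `w`: `w[i] = w[i+p]` whenever both positions are valid. -/
def HasPeriod {α : Type*} (w : List α) (p : ℕ) : Prop :=
  ∀ i, i + p < w.length → w[i]? = w[i + p]?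

/-- `substr w i j` is the substring `w[i..j]` (1-indexed, inclusive). -/
def substr {α : Type*} (w : List α) (i j : ℕ) : List α :=
  (w.drop (i - 1)).take (j - i + 1)

/-- `[i..j]` (1-indexed) is a run of `w` with (smallest) period `p`:
`p` is the smallest period of `w[i..j]`, the exponent is at least 2, and the
periodicity with period `p` extends neither to the left nor to the right. -/
def IsRun {α : Type*} (w : List α) (i j p : ℕ) : Prop :=
  1 ≤ i ∧ i ≤ j ∧ j ≤ w.length ∧ 0 < p ∧
  HasPeriod (substr w i j) p ∧
  (∀ q, 0 < q → q < p → ¬ HasPeriod (substr w i j) q) ∧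
  2 * p ≤ j - i + 1 ∧
  (i = 1 ∨ ¬ HasPeriod (substr w (i - 1) j) p) ∧
  (j = w.length ∨ ¬ HasPeriod (substr w i (j + 1)) p)

namespace List

variable {α : Type*}

theorem lt_of_append_lt_append_left [LT α] [Std.Irrefl (· < · : α → α → Prop)] :
    ∀ {l₁ l₂ l₃ : List α}, l₁ ++ l₂ < l₁ ++ l₃ → l₂ < l₃
  | [], _, _, h => h
  | _ :: _, _, _, h => lt_of_append_lt_append_left (by simpa using h)

theorem isPrefix_or_append_lt_append_of_lt [LT α] {a b : List α} (h : a < b) :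
    a <+: b ∨ ∀ x y, a ++ x < b ++ y := by
  induction h with
  | nil => exact Or.inl nil_prefix
  | rel h => exact Or.inr fun _ _ => Lex.rel h
  | cons _ ih =>
    rcases ih with hp | hl
    · exact Or.inl (cons_prefix_cons.mpr ⟨rfl, hp⟩)
    · exact Or.inr fun x y => Lex.cons (hl x y)

theorem append_lt_append_of_lt_of_length_eq [LT α] [Std.Irrefl (· < · : α → α → Prop)]
    {a b : List α} (h : a < b) (hlen : a.length = b.length) (x y : List α) :
    a ++ x < b ++ y := by
  rcases isPrefix_or_append_lt_append_of_lt h with hp | hl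
  · exact absurd (hp.eq_of_length hlen ▸ h) (List.lt_irrefl b)
  · exact hl x y

end List

section Lyndon

variable {α : Type*} [LinearOrder α]

theorem isLyndonWrt_of_lt_rotate {r : List α} (hne : r ≠ [])
    (hrot : ∀ k, 0 < k → k < r.length → r < r.rotate k) : IsLyndonWrt (· < ·) r := by
  refine ⟨hne, fun k hk hkr => ?_⟩
  show r < r.drop k
  set x := r.take k
  set v := r.drop k
  have hxv : x ++ v = r := List.take_append_drop k r
  have hvx : v ++ x = r.rotate k := (List.rotate_eq_drop_append_take hkr.le).symm
  by_contra! hle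
  have hlt : v < r := lt_of_le_of_ne hle fun h => by
    have := congrArg List.length h
    simp only [v, List.length_drop] at this
    omega
  rcases List.isPrefix_or_append_lt_append_of_lt hlt with ⟨y, hvy⟩ | hall
  · -- `r = x v = v y`: comparing `r` with `v x` gives `y < x`, hence `y v < x v = r`.
    have hyx : y < x := List.lt_of_append_lt_append_left (l₁ := v)
      (by rw [hvy, hvx]; exact hrot k hk hkr)
    have hlen : y.length = x.length := by
      have h1 := congrArg List.length hvy
      have h2 := congrArg List.length hxv
      simp only [List.length_append] at h1 h2
      omega
    have hyv : y ++ v < r := hxv ▸ List.append_lt_append_of_lt_of_length_eq hyx hlen v v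
    have hrv : r.rotate v.length = y ++ v := hvy ▸ List.rotate_append_length_eq v y
    have hv : 0 < v.length ∧ v.length < r.length := by
      simp only [v, List.length_drop]; omega
    exact lt_asymm (hrot _ hv.1 hv.2) (hrv ▸ hyv)
  · have := hall x []
    rw [List.append_nil, hvx] at this
    exact lt_asymm this (hrot k hk hkr)

end Lyndon

namespace HasPeriod

variable {α : Type*} {s : List α} {p : ℕ}

theorem getElem?_mod (h : HasPeriod s p) {x : ℕ} (hx : x < s.length) : s[x]? = s[x % p]? := by
  rcases p.eq_zero_or_pos with rfl | hp
  · rw [Nat.mod_zero]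
  induction x using Nat.strong_induction_on with
  | _ x ih =>
    rcases lt_or_ge x p with hxp | hxp
    · rw [Nat.mod_eq_of_lt hxp]
    · rw [Nat.mod_eq_sub_mod hxp, ← ih (x - p) (by omega) (by omega), h (x - p) (by omega),
        Nat.sub_add_cancel hxp]

theorem drop_take_eq_rotate (h : HasPeriod s p) {t : ℕ} (ht : t + p ≤ s.length) :
    (s.drop t).take p = (s.take p).rotate t := by
  have hu : (s.take p).length = p := List.length_take_of_le (by omega)
  apply List.ext_getElem?
  intro m
  rcases lt_or_ge m p with hm | hm
  · rw [List.getElem?_take_of_lt hm, List.getElem?_drop, List.getElem?_rotate (by omega), hu,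
      List.getElem?_take_of_lt (Nat.mod_lt _ (by omega)), h.getElem?_mod (by omega),
      Nat.add_comm]
  · rw [List.getElem?_eq_none (by simp; omega), List.getElem?_eq_none (by simp; omega)]

theorem of_rotate_take_eq (h : HasPeriod s p) (hp : 0 < p) (hps : p ≤ s.length) {k : ℕ}
    (hk : (s.take p).rotate k = s.take p) : HasPeriod s k := by
  intro x hx
  have hu : (s.take p).length = p := List.length_take_of_le hps
  have hxp := Nat.mod_lt x hp
  calc s[x]? = s[x % p]? := h.getElem?_mod (by omega)
    _ = (s.take p)[x % p]? := (List.getElem?_take_of_lt hxp).symm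
    _ = ((s.take p).rotate k)[x % p]? := by rw [hk]
    _ = (s.take p)[(x % p + k) % p]? := by rw [List.getElem?_rotate (by omega), hu]
    _ = s[(x + k) % p]? := by rw [List.getElem?_take_of_lt (Nat.mod_lt _ hp), Nat.mod_add_mod]
    _ = s[x + k]? := (h.getElem?_mod (by omega)).symm

end HasPeriod

theorem exists_isLyndonWrt_drop_take {α : Type*} [LinearOrder α] {s : List α} {p : ℕ}
    (hp : 0 < p) (hper : HasPeriod s p) (hmin : ∀ q, 0 < q → q < p → ¬ HasPeriod s q)
    (hlen : 2 * p ≤ s.length) :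
    ∃ t, 0 < t ∧ t + p ≤ s.length ∧ IsLyndonWrt (· < ·) ((s.drop t).take p) := by
  set u := s.take p
  have hu : u.length = p := List.length_take_of_le (by omega)
  obtain ⟨t, ht, hmin_rot⟩ :=
    (Finset.range p).exists_min_image u.rotate ⟨0, Finset.mem_range.mpr hp⟩
  have hle : ∀ k, u.rotate t ≤ u.rotate k := fun k => by
    rw [← List.rotate_mod u k, hu]
    exact hmin_rot _ (Finset.mem_range.mpr (Nat.mod_lt _ hp))
  have hlt : ∀ k, 0 < k → k < (u.rotate t).length → u.rotate t < (u.rotate t).rotate k := by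
    intro k hk hkp
    rw [List.length_rotate, hu] at hkp
    refine lt_of_le_of_ne (List.rotate_rotate u t k ▸ hle _) fun hfix => ?_
    have hk_fix : u.rotate k = u := by
      rwa [List.rotate_rotate, Nat.add_comm, ← List.rotate_rotate, eq_comm,
        List.rotate_eq_rotate] at hfix
    exact hmin k hk hkp (hper.of_rotate_take_eq hp (by omega) hk_fix)
  have hlyn : IsLyndonWrt (· < ·) (u.rotate t) :=
    isLyndonWrt_of_lt_rotate
      (List.ne_nil_of_length_pos (by rw [List.length_rotate, hu]; exact hp)) hlt
  obtain ⟨t', ht'0, ht'p, hrot⟩ : ∃ t', 0 < t' ∧ t' ≤ p ∧ u.rotate t' = u.rotate t := by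
    rcases t.eq_zero_or_pos with rfl | ht0
    · exact ⟨p, hp, le_rfl, by rw [← hu, List.rotate_length, List.rotate_zero]⟩
    · exact ⟨t, ht0, (Finset.mem_range.mp ht).le, rfl⟩
  exact ⟨t', ht'0, by omega, hper.drop_take_eq_rotate (t := t') (by omega) ▸ hrot ▸ hlyn⟩

theorem length_substr {α : Type*} {w : List α} {i j : ℕ} (hi : 1 ≤ i) (hij : i ≤ j)
    (hj : j ≤ w.length) : (substr w i j).length = j - i + 1 := by
  simp only [substr, List.length_take, List.length_drop]
  omega

theorem substr_add_eq_drop_take {α : Type*} {w : List α} {i j t p : ℕ} (hi : 1 ≤ i)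
    (hp : 0 < p) (htp : t + p ≤ j - i + 1) :
    substr w (i + t) (i + t + p - 1) = ((substr w i j).drop t).take p := by
  rw [substr, substr, List.drop_take, List.drop_drop, List.take_take,
    Nat.min_eq_left (by omega), show i + t + p - 1 - (i + t) + 1 = p by omega,
    show i - 1 + t = i + t - 1 by omega]

theorem IsRun.exists_isLyndonWrt_substr {α : Type*} [LinearOrder α] {w : List α} {i j p : ℕ}
    (hrun : IsRun w i j p) :
    ∃ i', i < i' ∧ i' + p - 1 ≤ j ∧ IsLyndonWrt (· < ·) (substr w i' (i' + p - 1)) := by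
  obtain ⟨hi, hij, hjw, hp, hper, hmin, hexp, -, -⟩ := hrun
  have hlen := length_substr hi hij hjw
  obtain ⟨t, ht, htp, hlyn⟩ := exists_isLyndonWrt_drop_take hp hper hmin (hlen ▸ hexp)
  exact ⟨i + t, by omega, by omega, substr_add_eq_drop_take hi hp (hlen ▸ htp) ▸ hlyn⟩

/-- Every run `[i..j]` of `w` with period `p` contains, for each of the two opposite
lexicographic orders, a length-`p` factor that is a Lyndon word w.r.t. that order
and that starts strictly after position `i`. -/
theorem stmt6 {α : Type*} [LinearOrder α] (w : List α) (i j p : ℕ)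
    (hrun : IsRun w i j p) :
    (∃ i', i < i' ∧ i' + p - 1 ≤ j ∧
      IsLyndonWrt (· < ·) (substr w i' (i' + p - 1))) ∧
    (∃ i', i < i' ∧ i' + p - 1 ≤ j ∧
      IsLyndonWrt (fun a b => b < a) (substr w i' (i' + p - 1))) :=
  ⟨hrun.exists_isLyndonWrt_substr, IsRun.exists_isLyndonWrt_substr (α := αᵒᵈ) hrun⟩
end

section
/- The number of runs in a trie with n edges is less than n. -/
/-!
Fix a strict total order `r` on the alphabet and orient each run of period `p` by `r` or by its
reverse, so that the letter just above the run is smaller than the letter `p` edges below it. The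
run then contains a Lyndon root (for its orientation) starting at most `p` edges above its bottom
node, and the run is charged to the node just below that root, whose parent is not the root.

Two runs charged to the same node coincide. If their periods were `p < p'`, then either the
orientations agree, and the first run's period together with the letter breaking it makes the
suffix at `p` of the second run's root no larger than that root; or they are opposite, and the
charged node's label is the last letter of both roots, contradicting that a Lyndon word begins
with a letter smaller than its last one. Runs of equal period end at the same top by maximality,
and at the same bottom because edges to distinct children carry distinct labels. Node `1` is a
child of the root and is never charged, so there are fewer than `n` runs.
-/

/-- A trie with `n` edges: nodes are `0, …, n` with root `0`; every non-root node `v`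
has a parent `parent v < v`, and the edge from `v` to its parent is labeled `label v`.
Edges from a node to its distinct children have distinct labels. -/
structure Trie (α : Type*) where
  n : ℕ
  parent : Fin (n + 1) → Fin (n + 1)
  label : Fin (n + 1) → α
  root_fixed : parent 0 = 0
  parent_lt : ∀ v : Fin (n + 1), v ≠ 0 → parent v < v
  labels_distinct : ∀ u v : Fin (n + 1), u ≠ 0 → v ≠ 0 →
    parent u = parent v → label u = label v → u = v

/-- `strUp T k u` is the string of edge labels read along the path of length `k`
from `u` towards the root, i.e. `str(u, parentᵏ u)`. -/
def strUp {α : Type*} (T : Trie α) : ℕ → Fin (T.n + 1) → List α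
  | 0, _ => []
  | k + 1, u => T.label u :: strUp T k (T.parent u)

/-- `(v, k)` is a run of the trie `T` with (smallest) period `p`: the path of length
`k` from `v` towards the root is a genuine path (not passing beyond the root), `p` is
the smallest period of its label string, the exponent is at least `2`, and the
periodicity extends neither towards the root (the auxiliary parent `⊥` of the root
carries a distinct label) nor towards the leaves (to any child of `v`). -/
def TrieRun {α : Type*} (T : Trie α) (v : Fin (T.n + 1)) (k p : ℕ) : Prop :=
  0 < p ∧ 2 * p ≤ k ∧ (∀ m, m < k → (T.parent)^[m] v ≠ 0) ∧
  HasPeriod (strUp T k v) p ∧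
  (∀ q, 0 < q → q < p → ¬ HasPeriod (strUp T k v) q) ∧
  ((T.parent)^[k] v = 0 ∨ ¬ HasPeriod (strUp T (k + 1) v) p) ∧
  (∀ u : Fin (T.n + 1), u ≠ 0 → T.parent u = v → ¬ HasPeriod (strUp T (k + 1) u) p)

open Function

section

variable {α : Type*} {r : α → α → Prop}

/-- `z 0 ⋯ z (p - 1)` is a Lyndon word for `r`: it is `r`-lexicographically smaller than each
of its proper suffixes, the comparison being decided strictly inside the suffix. -/
def IsLyndon (r : α → α → Prop) (p : ℕ) (z : ℕ → α) : Prop :=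
  ∀ q, 0 < q → q < p → ∃ m, q + m < p ∧ (∀ i < m, z i = z (q + i)) ∧ r (z m) (z (q + m))

theorem IsLyndon.congr {p : ℕ} {z z' : ℕ → α} (h : IsLyndon r p z)
    (hzz' : ∀ m < p, z m = z' m) : IsLyndon r p z' := by
  intro q hq hqp
  obtain ⟨m, hm, hpre, hrel⟩ := h q hq hqp
  refine ⟨m, hm, fun i hi => ?_, ?_⟩
  · rw [← hzz' i (by omega), ← hzz' (q + i) (by omega), hpre i hi]
  · rwa [← hzz' m (by omega), ← hzz' (q + m) (by omega)]

theorem IsLyndon.rel_head_last {p : ℕ} {z : ℕ → α} (h : IsLyndon r p z) (hp : 2 ≤ p) :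
    r (z 0) (z (p - 1)) := by
  obtain ⟨m, hm, -, hrel⟩ := h (p - 1) (by omega) (by omega)
  obtain rfl : m = 0 := by omega
  exact hrel

theorem IsLyndon.not_suffix_le [Std.Asymm r] {p q e : ℕ} {z : ℕ → α} (h : IsLyndon r p z)
    (hq : 0 < q) (hqp : q < p) (heq : ∀ i < e, z (q + i) = z i)
    (hlt : q + e < p → r (z (q + e)) (z e)) : False := by
  obtain ⟨m, hm, hpre, hrel⟩ := h q hq hqp
  rcases lt_trichotomy m e with hme | rfl | hem
  · exact irrefl _ (heq m hme ▸ hrel)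
  · exact asymm hrel (hlt hm)
  · exact irrefl _ (hpre e hem ▸ hlt (by omega))

theorem Function.Periodic.periodic_of_shift {y : ℕ → α} {p q j : ℕ} (hy : Periodic y p)
    (hp : 0 < p) (h : ∀ i < p, y (j + q + i) = y (j + i)) : Periodic y q := by
  have hmod : ∀ c n, y (c + n % p) = y (c + n) := fun c n => by
    rw [← hy.map_mod_nat (c + n % p), Nat.add_mod_mod, hy.map_mod_nat]
  have hmul : ∀ n, y (n + j * p) = y n := fun n => by
    rw [← hy.map_mod_nat, Nat.add_mul_mod_self_right, hy.map_mod_nat]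
  intro n
  obtain ⟨m, hm⟩ : ∃ m, j + m = n + j * p :=
    ⟨_, Nat.add_sub_cancel' (le_add_left (Nat.le_mul_of_pos_right j hp))⟩
  calc y (n + q) = y (j + q + m) := by rw [add_right_comm, hm, add_right_comm, hmul]
    _ = y (j + m) := by rw [← hmod, h _ (Nat.mod_lt _ hp), hmod]
    _ = y n := by rw [hm, hmul]

theorem eq_of_modEq_of_periodicOn {W : ℕ → α} {p k i j : ℕ}
    (hW : ∀ i, i + p < k → W i = W (i + p)) (hij : i ≡ j [MOD p]) (hi : i < k) (hj : j < k) :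
    W i = W j := by
  wlog hle : i ≤ j generalizing i j
  · exact (this hij.symm hj hi (by omega)).symm
  obtain ⟨c, hc⟩ := (Nat.modEq_iff_dvd' hle).mp hij
  obtain rfl : j = i + p * c := by omega
  clear hij hle hc
  induction c with
  | zero => rfl
  | succ c ih =>
    rw [Nat.mul_succ, ← add_assoc] at hj ⊢
    rw [ih (by omega), hW _ hj]

theorem Function.Periodic.exists_isLyndon_rotation [IsStrictTotalOrder α r] {y : ℕ → α} {p : ℕ} (hy : Periodic y p) (hp : 0 < p)
    (hprim : ∀ q, 0 < q → q < p → ¬ Periodic y q) :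
    ∃ j < p, IsLyndon r p (fun m => y (j + m)) := by
  classical
  -- with `<` on `α` being `r`, windows of length `p` are compared in `Lex (Fin p → α)`
  let _ : LinearOrder α := linearOrderOfSTO r
  let w : ℕ → Lex (Fin p → α) := fun j => toLex fun i => y (j + i)
  have hw : Periodic w p := fun j => by
    simp only [w, add_right_comm j p, hy _]
  obtain ⟨j, hj, hmin⟩ := Finset.exists_min_image (Finset.range p) w ⟨0, by simpa⟩
  have hmin' : ∀ j', w j ≤ w j' := fun j' =>
    hw.map_mod_nat j' ▸ hmin _ (Finset.mem_range.2 (Nat.mod_lt _ hp))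
  refine ⟨j, Finset.mem_range.1 hj, fun q hq hqp => ?_⟩
  have hne : w j ≠ w (j + q) := fun heq =>
    hprim q hq hqp (hy.periodic_of_shift hp fun i hi => (congrFun heq ⟨i, hi⟩).symm)
  obtain ⟨m, hpre, hlt⟩ := lt_of_le_of_ne (hmin' (j + q)) hne
  by_cases hm : q + (m : ℕ) < p
  · have hlt' : r (y (j + m)) (y (j + q + m)) := hlt
    refine ⟨m, hm, fun i hi => ?_, by simpa only [add_assoc] using hlt'⟩
    simpa [w, add_assoc] using hpre ⟨i, by omega⟩ hi
  · -- otherwise the rotation starting at `j + (p - q)` would be smaller than `w j`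
    exfalso
    refine (hmin' (j + (p - q))).not_gt ⟨⟨m - (p - q), by omega⟩, fun i hi => ?_, ?_⟩
    · have hi' : (i : ℕ) < m - (p - q) := hi
      have : y (j + (p - q + i)) = y (j + q + (p - q + i)) :=
        hpre ⟨p - q + i, by omega⟩ (show p - q + (i : ℕ) < m by omega)
      show y (j + (p - q) + i) = y (j + i)
      rw [add_assoc, this, show j + q + (p - q + i) = j + i + p by omega, hy]
    · show r (y (j + (p - q) + (m - (p - q)))) (y (j + (m - (p - q))))
      rw [← hy (j + (m - (p - q))), show j + (p - q) + (m - (p - q)) = j + m by omega,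
        show j + (m - (p - q)) + p = j + q + m by omega]
      exact hlt

theorem exists_isLyndon_root [IsStrictTotalOrder α r] {W : ℕ → α} {p k : ℕ}
    (hp : 0 < p) (hk : 2 * p ≤ k) (hper : ∀ i, i + p < k → W i = W (i + p))
    (hmin : ∀ q, 0 < q → q < p → ∃ i, i + q < k ∧ W i ≠ W (i + q)) :
    ∃ a < p, IsLyndon r p (fun m => W (m + 1 + a)) := by
  let y : ℕ → α := fun i => W (i % p + p)
  have hy : Periodic y p := fun i => by simp [y]
  have hyW : ∀ i < k, y i = W i := fun i hi =>
    eq_of_modEq_of_periodicOn hper (by simp [Nat.ModEq]) (by have := i.mod_lt hp; omega) hi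
  have hprim : ∀ q, 0 < q → q < p → ¬ Periodic y q := fun q hq hqp hyq => by
    obtain ⟨i, hi, hne⟩ := hmin q hq hqp
    exact hne (by rw [← hyW i (by omega), ← hyW (i + q) hi, hyq])
  obtain ⟨j, hj, hlyn⟩ := hy.exists_isLyndon_rotation (r := r) hp hprim
  -- a root starting at `0` also starts at `p`, so the start can be taken in `[1, p]`
  obtain ⟨a, ha, hja⟩ : ∃ a < p, j ≡ 1 + a [MOD p] := by
    rcases j with _ | a
    · exact ⟨p - 1, by omega, by rw [Nat.ModEq, Nat.add_sub_cancel' hp, Nat.mod_self, Nat.zero_mod]⟩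
    · exact ⟨a, by omega, by rw [add_comm]⟩
  refine ⟨a, ha, hlyn.congr fun m hm => ?_⟩
  have hmod : j + m ≡ m + 1 + a [MOD p] := by
    rw [show m + 1 + a = 1 + a + m by ring]
    exact hja.add_right m
  show y (j + m) = W (m + 1 + a)
  rw [← hyW _ (by omega), ← hy.map_mod_nat, hmod, hy.map_mod_nat]

namespace Trie

section

variable (T : Trie α)

theorem strUp_length (k : ℕ) (v : Fin (T.n + 1)) : (strUp T k v).length = k := by
  induction k generalizing v with
  | zero => rfl
  | succ k ih => simp [strUp, ih]

theorem strUp_getElem? {k i : ℕ} (v : Fin (T.n + 1)) (hi : i < k) :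
    (strUp T k v)[i]? = some (T.label (T.parent^[i] v)) := by
  induction k generalizing v i with
  | zero => omega
  | succ k ih =>
    cases i with
    | zero => simp [strUp]
    | succ i => simpa [strUp] using ih (T.parent v) (by omega)

theorem hasPeriod_strUp_iff {k p : ℕ} {v : Fin (T.n + 1)} :
    HasPeriod (strUp T k v) p ↔
      ∀ i, i + p < k → T.label (T.parent^[i] v) = T.label (T.parent^[i + p] v) := by
  simp only [HasPeriod, strUp_length]
  refine forall₂_congr fun i hi => ?_
  rw [T.strUp_getElem? v (by omega), T.strUp_getElem? v hi, Option.some_inj]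

theorem eq_of_label_iterate_parent_eq {u v : Fin (T.n + 1)} {d : ℕ}
    (hd : T.parent^[d] u = T.parent^[d] v) (hu : ∀ i < d, T.parent^[i] u ≠ 0)
    (hv : ∀ i < d, T.parent^[i] v ≠ 0)
    (hl : ∀ i < d, T.label (T.parent^[i] u) = T.label (T.parent^[i] v)) : u = v := by
  induction d generalizing u v with
  | zero => exact hd
  | succ d ih =>
    have hpar : T.parent u = T.parent v :=
      ih hd (fun i hi => hu (i + 1) (by omega)) (fun i hi => hv (i + 1) (by omega))
        (fun i hi => hl (i + 1) (by omega))
    exact T.labels_distinct u v (hu 0 d.succ_pos) (hv 0 d.succ_pos) hpar (hl 0 d.succ_pos)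

theorem ncard_setOf_parent_ne_zero_lt (hn : 0 < T.n) : {x | T.parent x ≠ 0}.ncard < T.n := by
  classical
  have h1 : (1 : Fin (T.n + 1)).val = 1 := by rw [Fin.val_one', Nat.one_mod_eq_one]; omega
  have h01 : (0 : Fin (T.n + 1)) ≠ 1 := by
    rw [Ne, Fin.ext_iff, h1, Fin.val_zero]
    exact zero_ne_one
  have hpar1 : T.parent 1 = 0 := by
    have h := T.parent_lt 1 h01.symm
    rw [Fin.lt_def, h1] at h
    exact Fin.ext (by simpa using h)
  have hsub : {x | T.parent x ≠ 0} ⊆ ↑({0, 1} : Finset (Fin (T.n + 1)))ᶜ := by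
    intro x hx
    simp only [Finset.coe_compl, Finset.coe_pair, Set.mem_compl_iff, Set.mem_insert_iff,
      Set.mem_singleton_iff, not_or]
    exact ⟨fun h => hx (h ▸ T.root_fixed), fun h => hx (h ▸ hpar1)⟩
  calc {x | T.parent x ≠ 0}.ncard
      ≤ (↑({0, 1} : Finset (Fin (T.n + 1)))ᶜ : Set (Fin (T.n + 1))).ncard := Set.ncard_le_ncard hsub
    _ = T.n + 1 - 2 := by
      rw [Set.ncard_coe_finset, Finset.card_compl, Fintype.card_fin, Finset.card_pair h01]
    _ < T.n := by omega

end

variable {T : Trie α}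

/-- A run `(v, k)` of period `p` with the data charging it to the node `T.parent^[a] v`, which lies
just below a Lyndon root for the orientation `s`. -/
structure IsLyndonRun (T : Trie α) (s : α → α → Prop) (v : Fin (T.n + 1)) (k p a : ℕ) : Prop where
  pos : 0 < p
  two_mul_le : 2 * p ≤ k
  lt_period : a < p
  ne_zero : ∀ m < k, T.parent^[m] v ≠ 0
  periodic : ∀ i, i + p < k → T.label (T.parent^[i] v) = T.label (T.parent^[i + p] v)
  top : T.parent^[k] v ≠ 0 → s (T.label (T.parent^[k] v)) (T.label (T.parent^[k - p] v))
  lyndon : IsLyndon s p (fun m => T.label (T.parent^[m + 1 + a] v))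
  no_child : ∀ c, c ≠ 0 → T.parent c = v → T.label c ≠ T.label (T.parent^[p - 1] v)

namespace IsLyndonRun

variable {s s' : α → α → Prop} {v v' : Fin (T.n + 1)} {k k' p p' a a' : ℕ}

theorem parent_anchor_ne_zero (h : T.IsLyndonRun s v k p a) : T.parent (T.parent^[a] v) ≠ 0 := by
  rw [← iterate_succ_apply' T.parent]
  exact h.ne_zero _ (by have := h.two_mul_le; have := h.lt_period; omega)

theorem not_lt_period [Std.Asymm s] (hs' : s' = s ∨ s' = swap s)
    (h : T.IsLyndonRun s v k p a) (h' : T.IsLyndonRun s' v' k' p' a')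
    (hx : T.parent^[a] v = T.parent^[a'] v') : ¬ p < p' := by
  intro hpp'
  have hshift : ∀ m, T.parent^[m + a] v = T.parent^[m + a'] v' := fun m => by
    rw [iterate_add_apply, iterate_add_apply, hx]
  have := h.two_mul_le; have := h.lt_period; have := h'.two_mul_le; have := h'.lt_period
  set z : ℕ → α := fun m => T.label (T.parent^[m + 1 + a] v)
  have hlyn' : IsLyndon s' p' z := by simpa only [z, hshift] using h'.lyndon
  rcases hs' with rfl | rfl
  · -- the suffix of the longer root at `p` is not larger than that root
    refine hlyn'.not_suffix_le (e := k - p - (1 + a)) h.pos hpp' (fun i hi => ?_) fun he => ?_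
    · simp only [z]
      rw [show p + i + 1 + a = i + 1 + a + p by omega, ← h.periodic _ (by omega)]
    · have hk : T.parent^[k] v ≠ 0 := by
        rw [show k = p + (k - p - (1 + a)) + 1 + a by omega, hshift]
        exact h'.ne_zero _ (by omega)
      simpa only [z, show p + (k - p - (1 + a)) + 1 + a = k by omega,
        show k - p - (1 + a) + 1 + a = k - p by omega] using h.top hk
  · -- the anchor's label is the last letter of both roots: above their common first letter for
    -- one orientation, below it for the other
    have hlast : z (p - 1) = z (p' - 1) := by
      simp only [z]
      rw [show p - 1 + 1 + a = a + p by omega, ← h.periodic a (by omega), hshift,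
        show p' - 1 + 1 + a' = a' + p' by omega, ← h'.periodic a' (by omega), hx]
    have hhead : s (z (p - 1)) (z 0) := hlast ▸ hlyn'.rel_head_last (by omega)
    rcases Nat.lt_or_ge p 2 with hp1 | hp2
    · exact irrefl _ (show p - 1 = 0 by omega ▸ hhead)
    · exact asymm (h.lyndon.rel_head_last hp2) hhead

theorem sub_le_of_anchor_eq [Std.Irrefl s] (h : T.IsLyndonRun s v k p a)
    (h' : T.IsLyndonRun s' v' k' p a') (hx : T.parent^[a] v = T.parent^[a'] v') :
    k' - a' ≤ k - a := by
  by_contra! hlt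
  have hshift : ∀ m, T.parent^[m + a] v = T.parent^[m + a'] v' := fun m => by
    rw [iterate_add_apply, iterate_add_apply, hx]
  have := h.two_mul_le; have := h.lt_period
  obtain ⟨e, rfl⟩ : ∃ e, k = e + p + 1 + a := ⟨k - p - 1 - a, by omega⟩
  -- the second run is still `p`-periodic where the first one breaks its period
  have hper := h'.periodic (e + 1 + a') (by omega)
  have htop := h.top (by rw [hshift]; exact h'.ne_zero _ (by omega))
  rw [show e + p + 1 + a - p = e + 1 + a by omega, hshift, hshift,
    show e + p + 1 + a' = e + 1 + a' + p by omega, ← hper] at htop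
  exact irrefl _ htop

theorem eq_of_anchor_eq_of_le (h : T.IsLyndonRun s v k p a) (h' : T.IsLyndonRun s' v' k' p a')
    (hx : T.parent^[a] v = T.parent^[a'] v') (haa' : a ≤ a') : v = v' ∧ a = a' := by
  have := h.two_mul_le; have := h.lt_period; have := h'.two_mul_le; have := h'.lt_period
  obtain ⟨d, rfl⟩ : ∃ d, a' = a + d := ⟨a' - a, by omega⟩
  have hshift : ∀ m, T.parent^[m + a] v = T.parent^[m + (a + d)] v' := fun m => by
    rw [iterate_add_apply, iterate_add_apply, hx]
  -- below the anchor both paths carry the same `p`-periodic labels, so they coincide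
  have hv : v = T.parent^[d] v' := by
    refine T.eq_of_label_iterate_parent_eq (d := a) (by rw [← iterate_add_apply, hx])
      (fun i hi => h.ne_zero i (by omega)) (fun i hi => ?_) (fun i hi => ?_)
    · rw [← iterate_add_apply]
      exact h'.ne_zero _ (by omega)
    · rw [← iterate_add_apply, h.periodic i (by omega), h'.periodic (i + d) (by omega),
        show i + p = i + p - a + a by omega, hshift]
      congr 2
      omega
  rcases d with _ | d
  · exact ⟨hv, rfl⟩
  · -- otherwise the next node towards `v'` is a child of `v` continuing the period
    refine absurd ?_ (h.no_child _ (h'.ne_zero d (by omega)) (by rw [hv, iterate_succ_apply']))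
    rw [h'.periodic d (by omega), show p - 1 = p - 1 - a + a by omega, hshift]
    congr 2
    omega

theorem eq_of_anchor_eq [Std.Asymm r] (hs : s = r ∨ s = swap r)
    (hs' : s' = r ∨ s' = swap r) (h : T.IsLyndonRun s v k p a) (h' : T.IsLyndonRun s' v' k' p' a')
    (hx : T.parent^[a] v = T.parent^[a'] v') : v = v' ∧ k = k' := by
  have : Std.Asymm s := by rcases hs with rfl | rfl <;> infer_instance
  have : Std.Asymm s' := by rcases hs' with rfl | rfl <;> infer_instance
  have hss' : s' = s ∨ s' = swap s := by
    rcases hs with rfl | rfl <;> rcases hs' with rfl | rfl <;> simp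
  have hs's : s = s' ∨ s = swap s' := by
    rcases hs with rfl | rfl <;> rcases hs' with rfl | rfl <;> simp
  obtain rfl : p = p' := le_antisymm (not_lt.1 (h'.not_lt_period hs's h hx.symm))
    (not_lt.1 (h.not_lt_period hss' h' hx))
  obtain ⟨rfl, rfl⟩ : v = v' ∧ a = a' := (le_total a a').elim (h.eq_of_anchor_eq_of_le h' hx)
    fun ha => (h'.eq_of_anchor_eq_of_le h hx.symm ha).imp Eq.symm Eq.symm
  have := h.sub_le_of_anchor_eq h' rfl
  have := h'.sub_le_of_anchor_eq h rfl
  have := h.two_mul_le; have := h.lt_period; have := h'.two_mul_le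
  exact ⟨rfl, by omega⟩

end IsLyndonRun

end Trie

namespace TrieRun

variable {T : Trie α} {v : Fin (T.n + 1)} {k p : ℕ}

theorem label_top_ne (h : TrieRun T v k p) (hk : T.parent^[k] v ≠ 0) :
    T.label (T.parent^[k] v) ≠ T.label (T.parent^[k - p] v) := by
  obtain ⟨-, hkp, -, hper, -, htop, -⟩ := h
  refine fun heq => htop.resolve_left hk (T.hasPeriod_strUp_iff.2 fun i hi => ?_)
  rcases Nat.lt_or_ge (i + p) k with hik | hik
  · exact T.hasPeriod_strUp_iff.1 hper i hik
  · obtain rfl : i = k - p := by omega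
    rw [Nat.sub_add_cancel (by omega), heq]

theorem label_child_ne (h : TrieRun T v k p) {c : Fin (T.n + 1)} (hc : c ≠ 0)
    (hcv : T.parent c = v) : T.label c ≠ T.label (T.parent^[p - 1] v) := by
  obtain ⟨hp, -, -, hper, -, -, hchild⟩ := h
  refine fun heq => hchild c hc hcv (T.hasPeriod_strUp_iff.2 fun i hi => ?_)
  rcases i with _ | i
  · rwa [zero_add, ← Nat.sub_add_cancel hp, iterate_succ_apply, hcv, iterate_zero_apply]
  · rw [add_right_comm, iterate_succ_apply, iterate_succ_apply, hcv]
    exact T.hasPeriod_strUp_iff.1 hper i (by omega)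

theorem exists_isLyndonRun [IsStrictTotalOrder α r] (h : TrieRun T v k p) :
    ∃ s a, (s = r ∨ s = swap r) ∧ T.IsLyndonRun s v k p a := by
  obtain ⟨s, hs, htop⟩ : ∃ s, (s = r ∨ s = swap r) ∧ (T.parent^[k] v ≠ 0 →
      s (T.label (T.parent^[k] v)) (T.label (T.parent^[k - p] v))) := by
    by_cases hk : T.parent^[k] v = 0
    · exact ⟨r, .inl rfl, absurd hk⟩
    · rcases trichotomous_of r (T.label (T.parent^[k] v)) (T.label (T.parent^[k - p] v))
        with hlt | heq | hgt
      · exact ⟨r, .inl rfl, fun _ => hlt⟩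
      · exact absurd heq (h.label_top_ne hk)
      · exact ⟨swap r, .inr rfl, fun _ => hgt⟩
  have : IsStrictTotalOrder α s := by rcases hs with rfl | rfl <;> infer_instance
  have hchild := @h.label_child_ne
  obtain ⟨hp, hk, hne, hper, hmin, -, -⟩ := h
  rw [T.hasPeriod_strUp_iff] at hper
  simp only [T.hasPeriod_strUp_iff, not_forall] at hmin
  obtain ⟨a, ha, hlyn⟩ := exists_isLyndon_root (r := s) hp hk hper fun q hq hqp => by
    simpa using hmin q hq hqp
  exact ⟨s, a, hs, hp, hk, ha, hne, hper, htop, hlyn, fun c hc hcv => hchild hc hcv⟩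

end TrieRun

end

/-- The number of runs in a trie with `n ≥ 1` edges is less than `n`. -/
theorem stmt11 {α : Type*} (T : Trie α) (hn : 0 < T.n) :
    Set.ncard {vk : Fin (T.n + 1) × ℕ | ∃ p, TrieRun T vk.1 vk.2 p} < T.n := by
  have hruns : ∀ vk ∈ {vk : Fin (T.n + 1) × ℕ | ∃ p, TrieRun T vk.1 vk.2 p}, ∃ p s a,
      (s = WellOrderingRel ∨ s = swap WellOrderingRel) ∧ T.IsLyndonRun s vk.1 vk.2 p a :=
    fun vk ⟨p, hp⟩ => ⟨p, hp.exists_isLyndonRun⟩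
  choose! p s a hs hrun using hruns
  refine lt_of_le_of_lt (Set.ncard_le_ncard_of_injOn (fun vk => T.parent^[a vk] vk.1)
    (fun vk hvk => (hrun vk hvk).parent_anchor_ne_zero) ?_) (T.ncard_setOf_parent_ne_zero_lt hn)
  intro vk hvk vk' hvk' hx
  obtain ⟨hv, hk⟩ := (hrun vk hvk).eq_of_anchor_eq (hs vk hvk) (hs vk' hvk') (hrun vk' hvk') hx
  exact Prod.ext hv hk
end
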